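/- Let A ⊆ B be fields, let T = A + XB[X], and let f ∈ B[X] be a polynomial whose constant coefficient lies in A (so f ∈ T). Then f is irreducible in T if and only if f is irreducible in the polynomial ring B[X]. -/

import Mathlib

/-- The composite `T = A + X B[X]` for a subfield `A` of a field `B`: the subring
(an integral domain) of the polynomial ring `B[X]` consisting of all polynomials
whose constant coefficient lies in `A`. -/
def fieldComposite (B : Type*) [Field B] (A : Subfield B) :
    Subring (Polynomial B) where
  carrier := {f | f.coeff 0 ∈ A}
  zero_mem' := by simpa using zero_mem A
  one_mem' := by simpa using one_mem A
  add_mem' := fun hf hg => by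
    simpa [Polynomial.coeff_add] using add_mem hf hg
  neg_mem' := fun hf => by
    simpa [Polynomial.coeff_neg] using neg_mem (s := A) hf
  mul_mem' := fun hf hg => by
    simpa [Polynomial.mul_coeff_zero] using mul_mem hf hg

/-! A factorization `f = g * h` in `B[X]` can be rebalanced by a scalar `c ≠ 0` to
`f = (c • g) * (c⁻¹ • h)` with both constant terms in `A`, and the units of `T` are the units of
`B[X]` that lie in `T`. Hence `f` has the same factorizations in `T` as in `B[X]`, up to units. -/

open Polynomial

theorem Submonoid.irreducible_mk_iff {M : Type*} [CommMonoid M] {S : Submonoid M} {x : M}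
    (hx : x ∈ S)
    (isUnit_mk : ∀ u (hu : u ∈ S), IsUnit u → IsUnit (⟨u, hu⟩ : S))
    (exists_units_mul_mem : ∀ a b : M, a * b ∈ S → ∃ u : Mˣ, a * ↑u ∈ S ∧ ↑u⁻¹ * b ∈ S) :
    Irreducible (⟨x, hx⟩ : S) ↔ Irreducible x := by
  have isUnit_mk_iff : ∀ u (hu : u ∈ S), IsUnit (⟨u, hu⟩ : S) ↔ IsUnit u :=
    fun u hu => ⟨fun h => h.map S.subtype, isUnit_mk u hu⟩
  simp only [irreducible_iff, isUnit_mk_iff]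
  refine and_congr_right fun _ => ⟨fun h a b hab => ?_, fun h => ?_⟩
  · obtain ⟨u, hau, hub⟩ := exists_units_mul_mem a b (hab ▸ hx)
    have hx' : x = a * u * (↑u⁻¹ * b) := by simp [hab, mul_assoc]
    simpa [isUnit_mk_iff] using @h ⟨_, hau⟩ ⟨_, hub⟩ (Subtype.ext hx')
  · rintro ⟨a, ha⟩ ⟨b, hb⟩ hab
    simpa [isUnit_mk_iff] using @h a b (congrArg Subtype.val hab)

theorem Subfield.exists_ne_zero_mul_mem_and_inv_mul_mem {K : Type*} [Field K] {A : Subfield K}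
    {a b : K} (hab : a * b ∈ A) : ∃ c ≠ 0, c * a ∈ A ∧ c⁻¹ * b ∈ A := by
  by_cases hb : b = 0
  · by_cases ha : a = 0
    · exact ⟨1, one_ne_zero, by simp [ha, zero_mem], by simp [hb, zero_mem]⟩
    · exact ⟨a⁻¹, inv_ne_zero ha, by simp [ha, one_mem], by simp [hb, zero_mem]⟩
  · exact ⟨b, hb, by rwa [mul_comm], by simp [hb, one_mem]⟩

namespace fieldComposite

variable {B : Type*} [Field B] {A : Subfield B}

theorem mem_iff {p : B[X]} : p ∈ fieldComposite B A ↔ p.coeff 0 ∈ A := Iff.rfl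

theorem isUnit_mk {u : B[X]} (hu : u ∈ fieldComposite B A) (hunit : IsUnit u) :
    IsUnit (⟨u, hu⟩ : fieldComposite B A) := by
  obtain ⟨c, hc, rfl⟩ := Polynomial.isUnit_iff.mp hunit
  have hcA : c ∈ A := by simpa [mem_iff] using hu
  have hinv : C c⁻¹ ∈ fieldComposite B A := by simpa [mem_iff] using inv_mem hcA
  refine IsUnit.of_mul_eq_one ⟨C c⁻¹, hinv⟩ (Subtype.ext ?_)
  simp [← C_mul, mul_inv_cancel₀ hc.ne_zero]

theorem exists_units_mul_mem {g h : B[X]} (hgh : g * h ∈ fieldComposite B A) :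
    ∃ u : B[X]ˣ, g * u ∈ fieldComposite B A ∧ ↑u⁻¹ * h ∈ fieldComposite B A := by
  rw [mem_iff, mul_coeff_zero] at hgh
  obtain ⟨c, hc, hcg, hch⟩ := Subfield.exists_ne_zero_mul_mem_and_inv_mul_mem hgh
  refine ⟨Units.map C.toMonoidHom (Units.mk0 c hc), ?_, ?_⟩
  · simpa [mem_iff, mul_comm] using hcg
  · simpa [mem_iff] using hch

end fieldComposite

/-- Let `A ⊆ B` be fields, let `T = A + X B[X]`, and let `f ∈ B[X]` be a
polynomial whose constant coefficient lies in `A` (so `f ∈ T`).  Then `f` is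
irreducible in `T` if and only if `f` is irreducible in the polynomial ring `B[X]`. -/
theorem irreducible_fieldComposite_iff_irreducible (B : Type*) [Field B]
    (A : Subfield B) (f : Polynomial B) (hf : f ∈ fieldComposite B A) :
    Irreducible (⟨f, hf⟩ : fieldComposite B A) ↔ Irreducible f :=
  Submonoid.irreducible_mk_iff (S := (fieldComposite B A).toSubmonoid) hf
    (fun _ => fieldComposite.isUnit_mk) (fun _ _ => fieldComposite.exists_units_mul_mem)
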